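/- There do not exist functions F̃, G : (0,1] → (0,∞) such that 1 - s2·t2 = F̃(s1)·G(s2)·F̃(t1)·G(t2) for all 0 < s1 ≤ s2 ≤ 1 and 0 < t1 ≤ t2 ≤ 1. -/
import Mathlib

theorem stmt7 :
    ¬ ∃ F G : ℝ → ℝ,
      (∀ s ∈ Set.Ioc (0:ℝ) 1, 0 < F s) ∧
      (∀ s ∈ Set.Ioc (0:ℝ) 1, 0 < G s) ∧
      (∀ s1 s2 t1 t2 : ℝ, 0 < s1 → s1 ≤ s2 → s2 ≤ 1 → 0 < t1 → t1 ≤ t2 → t2 ≤ 1 →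
        1 - s2 * t2 = F s1 * G s2 * F t1 * G t2) := by
  rintro ⟨F, G, hF, hG, h⟩
  have h1 := h 1 1 1 1 one_pos le_rfl le_rfl one_pos le_rfl le_rfl
  have hF1 := hF 1 ⟨one_pos, le_rfl⟩
  have hG1 := hG 1 ⟨one_pos, le_rfl⟩
  nlinarith [mul_pos (mul_pos (mul_pos hF1 hG1) hF1) hG1]
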